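/- Let t ∈ ℂ \ {0,1} and ρ as in the previous construction: ρ = Σᵢ λᵢ (aᵢaᵢ†)⊗(φᵢφᵢ†) with λ₁=|t²−t|, λ₂=|t−1|, λ₃=|t|, λ₄=1, aᵢ the columns of [[1,0,1,t],[0,1,1,1]] and φᵢ the (unnormalized) Bell vectors (1,0,0,1)ᵀ, (1,0,0,−1)ᵀ, (0,1,1,0)ᵀ, (0,1,−1,0)ᵀ. Then the Lorentz invariant I_ρ = Tr(ρᵀ ε₃ ρ ε₃) equals 0. -/

import Mathlib

open Matrix

noncomputable def eps : Matrix (Fin 2) (Fin 2) ℂ := !![0, 1; -1, 0]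

/-- ε₃ = ε ⊗ ε ⊗ ε on the index type Fin 2 × Fin 2 × Fin 2. -/
noncomputable def eps3 : Matrix (Fin 2 × Fin 2 × Fin 2) (Fin 2 × Fin 2 × Fin 2) ℂ :=
  Matrix.of fun i j => eps i.1 j.1 * eps i.2.1 j.2.1 * eps i.2.2 j.2.2

/-- The four vectors (1,0), (0,1), (1,1), (t,1). -/
def avecs (t : ℂ) : Fin 4 → Fin 2 → ℂ := ![![1, 0], ![0, 1], ![1, 1], ![t, 1]]

/-- The four (unnormalized) Bell vectors in ℂ² ⊗ ℂ². -/
noncomputable def phiv : Fin 4 → Fin 2 × Fin 2 → ℂ :=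
  fun j p => (![!![1, 0; 0, 1], !![1, 0; 0, -1], !![0, 1; 1, 0], !![0, 1; -1, 0]] j) p.1 p.2

/-- The bipartite product vectors eᵢ = aᵢ ⊗ φᵢ in ℂ² ⊗ (ℂ² ⊗ ℂ²). -/
noncomputable def evec (t : ℂ) (i : Fin 4) : Fin 2 × Fin 2 × Fin 2 → ℂ :=
  fun p => avecs t i p.1 * phiv i p.2

/-- The weights λ₁ = |t²−t|, λ₂ = |t−1|, λ₃ = |t|, λ₄ = 1. -/
noncomputable def lam (t : ℂ) : Fin 4 → ℂ :=
  ![(‖t ^ 2 - t‖ : ℂ), (‖t - 1‖ : ℂ), (‖t‖ : ℂ), 1]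

/-- The type-II state ρ(t) = Σ λᵢ eᵢeᵢ†. -/
noncomputable def rhoT (t : ℂ) : Matrix (Fin 2 × Fin 2 × Fin 2) (Fin 2 × Fin 2 × Fin 2) ℂ :=
  ∑ i, lam t i • vecMulVec (evec t i) (star (evec t i))

/-!
Write ρ = Σ λᵢ eᵢ ēᵢᵀ with eᵢ = aᵢ ⊗ φᵢ. Then ρᵀ ε₃ ρ is a combination of the matrices
ēᵢ (eᵢᵀ ε₃ eⱼ) ēⱼᵀ, and since ε₃ = ε ⊗ (ε ⊗ ε) the scalar factor splits as
(aᵢᵀ ε aⱼ) (φᵢᵀ (ε ⊗ ε) φⱼ). The first factor vanishes for i = j because ε is alternating,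
the second for i ≠ j by a direct check on the Bell vectors. So already ρᵀ ε₃ ρ = 0.
-/

open scoped Kronecker

namespace Matrix

variable {ι n R : Type*} [Fintype ι] [Fintype n] [CommRing R]

theorem sum_vecMulVec_transpose_mul_mul_eq_zero (E : Matrix n n R) (c : ι → R) (v w : ι → n → R)
    (h : ∀ i j, v i ⬝ᵥ E *ᵥ v j = 0) :
    (∑ i, c i • vecMulVec (v i) (w i))ᵀ * E * ∑ i, c i • vecMulVec (v i) (w i) = 0 := by
  have hterm : ∀ i j, vecMulVec (w i) (v i) * E * vecMulVec (v j) (w j) = 0 := fun i j => by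
    rw [Matrix.mul_assoc, mul_vecMulVec, vecMulVec_mul_vecMulVec, h, zero_smul, vecMulVec_zero]
  simp only [transpose_sum, transpose_smul, transpose_vecMulVec, Matrix.sum_mul, Matrix.mul_sum,
    Matrix.smul_mul, Matrix.mul_smul, hterm, smul_zero, Finset.sum_const_zero]

variable {m : Type*} [Fintype m]

theorem kronecker_mulVec_prod (A : Matrix m m R) (B : Matrix n n R) (x : m → R) (y : n → R) :
    (A ⊗ₖ B) *ᵥ (fun p : m × n => x p.1 * y p.2) = fun p => (A *ᵥ x) p.1 * (B *ᵥ y) p.2 := by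
  ext ⟨i, j⟩
  simp only [mulVec, dotProduct, kronecker_apply, Fintype.sum_prod_type, Finset.sum_mul_sum]
  exact Finset.sum_congr rfl fun _ _ => Finset.sum_congr rfl fun _ _ => by ring

theorem prod_dotProduct_prod (x u : m → R) (y w : n → R) :
    (fun p : m × n => x p.1 * y p.2) ⬝ᵥ (fun p => u p.1 * w p.2) = (x ⬝ᵥ u) * (y ⬝ᵥ w) := by
  simp only [dotProduct, Fintype.sum_prod_type, Finset.sum_mul_sum]
  exact Finset.sum_congr rfl fun _ _ => Finset.sum_congr rfl fun _ _ => by ring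

theorem dotProduct_kronecker_mulVec (A : Matrix m m R) (B : Matrix n n R)
    (x x' : m → R) (y y' : n → R) :
    (fun p : m × n => x p.1 * y p.2) ⬝ᵥ (A ⊗ₖ B) *ᵥ (fun p : m × n => x' p.1 * y' p.2) =
      (x ⬝ᵥ A *ᵥ x') * (y ⬝ᵥ B *ᵥ y') := by
  rw [kronecker_mulVec_prod, prod_dotProduct_prod]

end Matrix

theorem eps3_eq_kronecker : eps3 = eps ⊗ₖ (eps ⊗ₖ eps) := by
  ext i j
  simp [eps3, mul_assoc]

theorem dotProduct_eps_mulVec_self (x : Fin 2 → ℂ) : x ⬝ᵥ eps *ᵥ x = 0 := by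
  simp [dotProduct, mulVec, eps, Fin.sum_univ_two, mul_comm]

theorem phiv_dotProduct_kronecker_eps_mulVec {i j : Fin 4} (hij : i ≠ j) :
    phiv i ⬝ᵥ (eps ⊗ₖ eps) *ᵥ phiv j = 0 := by
  fin_cases i <;> fin_cases j <;>
    simp_all [phiv, eps, dotProduct, mulVec, Fintype.sum_prod_type]

theorem evec_dotProduct_eps3_mulVec (t : ℂ) (i j : Fin 4) :
    evec t i ⬝ᵥ eps3 *ᵥ evec t j = 0 := by
  unfold evec
  rw [eps3_eq_kronecker, dotProduct_kronecker_mulVec]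
  obtain rfl | hij := eq_or_ne i j
  · rw [dotProduct_eps_mulVec_self, zero_mul]
  · rw [phiv_dotProduct_kronecker_eps_mulVec hij, mul_zero]

theorem stmt17_general (t : ℂ) :
    ((rhoT t)ᵀ * eps3 * rhoT t * eps3).trace = 0 := by
  rw [rhoT, sum_vecMulVec_transpose_mul_mul_eq_zero _ _ _ _ (evec_dotProduct_eps3_mulVec t),
    Matrix.zero_mul, trace_zero]

theorem stmt17 (t : ℂ) (h0 : t ≠ 0) (h1 : t ≠ 1) :
    ((rhoT t)ᵀ * eps3 * rhoT t * eps3).trace = 0 :=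
  stmt17_general t
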